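/- Let H, G be groups with action φ: G → Aut(H), and define V₁ = H, 𝐻̃_n = ⟨φ(g)(h)h⁻¹ : g ∈ G, h ∈ V_{n−1}⟩, V_n = ⟨𝐻̃_n, [H, V_{n−1}]⟩ for n ≥ 2. Then for all n ≥ 1, the derived series term satisfies (H ⋊_φ G)^{(n−1)} ⊆ V_n ⋊_φ G^{(n−1)}. -/

import Mathlib

/-! Write `Aₙ = inl Vₙ`. Since `[H, Vₙ] ≤ Vₙ₊₁` and `φ(g)(v)v⁻¹ ∈ Vₙ₊₁` for `v ∈ Vₙ`, the image
of `Aₙ` is central in `(H ⋊_φ G) ⧸ Aₙ₊₁`. So modulo `Aₙ₊₁` a commutator of two elements of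
`Aₙ · inr G⁽ⁿ⁾` equals the commutator of their `G⁽ⁿ⁾`-parts, and induction on `n` finishes. -/

/-- The subgroups `V_n` of `H` from Theorem 1.2 of the paper (zero-based indexing, so
`Vseries φ (n-1)` is the paper's `V_n`): `V₁ = H` and
`V_{n+1} = ⟨H̃_{n+1}, [H, V_n]⟩` where `H̃_{n+1} = ⟨φ(g)(h)h⁻¹ : g ∈ G, h ∈ V_n⟩`. -/
def Vseries {G H : Type*} [Group G] [Group H] (φ : G →* MulAut H) : ℕ → Subgroup H
  | 0 => ⊤
  | n + 1 =>
      Subgroup.closure {x : H | ∃ g : G, ∃ h ∈ Vseries φ n, x = φ g h * h⁻¹} ⊔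
      ⁅(⊤ : Subgroup H), Vseries φ n⁆

open scoped commutatorElement

namespace Subgroup

variable {Q : Type*} [Group Q]

lemma commutatorElement_mul_left_of_mem_center {a : Q} (ha : a ∈ center Q) (b c : Q) :
    ⁅a * b, c⁆ = ⁅b, c⁆ := by
  have hcomm : ∀ x, Commute a x := fun x ↦ (mem_center_iff.mp ha x).symm
  rw [commutatorElement_mul_left_eq_conj_mul, (hcomm _).mul_inv_cancel, (hcomm c).commutator_eq,
    mul_one]

lemma commutatorElement_mul_right_of_mem_center {a : Q} (ha : a ∈ center Q) (b c : Q) :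
    ⁅b, a * c⁆ = ⁅b, c⁆ := by
  rw [← commutatorElement_inv, commutatorElement_mul_left_of_mem_center ha, commutatorElement_inv]

lemma commutator_sup_le_sup_commutator {A B M : Subgroup Q} [A.Normal] [M.Normal]
    (hA : ⁅(⊤ : Subgroup Q), A⁆ ≤ M) : ⁅A ⊔ B, A ⊔ B⁆ ≤ M ⊔ ⁅B, B⁆ := by
  let π := QuotientGroup.mk' M
  have central : ∀ a ∈ A, π a ∈ center (Q ⧸ M) := by
    intro a ha
    refine mem_center_iff.mpr fun q ↦ QuotientGroup.induction_on q fun z ↦ ?_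
    rw [← commutatorElement_eq_one_iff_mul_comm]
    exact (QuotientGroup.eq_one_iff ⁅z, a⁆).mpr (commutator_le.mp hA z (mem_top z) a ha)
  rw [commutator_le]
  rintro _ hx _ hy
  obtain ⟨a, ha, b, hb, rfl⟩ := mem_sup_of_normal_left.mp hx
  obtain ⟨a', ha', b', hb', rfl⟩ := mem_sup_of_normal_left.mp hy
  have hquot : π ⁅a * b, a' * b'⁆ = π ⁅b, b'⁆ := by
    rw [map_commutatorElement, map_mul, map_mul,
      commutatorElement_mul_left_of_mem_center (central a ha),
      commutatorElement_mul_right_of_mem_center (central a' ha'), map_commutatorElement]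
  rw [← div_mul_cancel ⁅a * b, a' * b'⁆ ⁅b, b'⁆]
  exact mul_mem_sup (QuotientGroup.eq_iff_div_mem.mp hquot) (commutator_mem_commutator hb hb')

end Subgroup

namespace Vseries

variable {G H : Type*} [Group G] [Group H] (φ : G →* MulAut H)

lemma map_mul_inv_mem_succ {n : ℕ} (g : G) {h : H} (hh : h ∈ Vseries φ n) :
    φ g h * h⁻¹ ∈ Vseries φ (n + 1) :=
  Subgroup.mem_sup_left (Subgroup.subset_closure ⟨g, h, hh, rfl⟩)

lemma commutator_top_le_succ (n : ℕ) : ⁅(⊤ : Subgroup H), Vseries φ n⁆ ≤ Vseries φ (n + 1) :=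
  le_sup_right

lemma succ_le (n : ℕ) : Vseries φ (n + 1) ≤ Vseries φ n := by
  induction n with
  | zero => exact le_top
  | succ n ih =>
    rw [Vseries]
    refine sup_le ?_ ((Subgroup.commutator_mono le_rfl ih).trans (commutator_top_le_succ φ n))
    rw [Subgroup.closure_le]
    rintro _ ⟨g, h, hh, rfl⟩
    exact map_mul_inv_mem_succ φ g (ih hh)

instance normal (n : ℕ) : (Vseries φ n).Normal :=
  Subgroup.commutator_top_left_le_iff.mp ((commutator_top_le_succ φ n).trans (succ_le φ n))

lemma commutator_top_map_inl_le (n : ℕ) :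
    ⁅(⊤ : Subgroup (H ⋊[φ] G)), (Vseries φ n).map (SemidirectProduct.inl : H →* H ⋊[φ] G)⁆ ≤
      (Vseries φ (n + 1)).map SemidirectProduct.inl := by
  rw [Subgroup.commutator_le]
  rintro z - _ ⟨v, hv, rfl⟩
  have hcomm : ⁅z, (SemidirectProduct.inl v : H ⋊[φ] G)⁆ =
      SemidirectProduct.inl (z.left * (φ z.right v * v⁻¹) * z.left⁻¹ * ⁅z.left, v⁆) := by
    ext <;> simp [commutatorElement_def, mul_assoc]
  rw [hcomm]
  refine ⟨_, mul_mem ?_ ?_, rfl⟩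
  · exact (normal φ (n + 1)).conj_mem _ (map_mul_inv_mem_succ φ z.right hv) _
  · exact commutator_top_le_succ φ n (Subgroup.commutator_mem_commutator (Subgroup.mem_top _) hv)

instance map_inl_normal (n : ℕ) :
    ((Vseries φ n).map (SemidirectProduct.inl : H →* H ⋊[φ] G)).Normal :=
  Subgroup.commutator_top_left_le_iff.mp
    ((commutator_top_map_inl_le φ n).trans (Subgroup.map_mono (succ_le φ n)))

end Vseries

/-- Theorem 1.2(2): `(H ⋊_φ G)^{(n-1)} ⊆ V_n ⋊_φ G^{(n-1)}` for all `n ≥ 1`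
(zero-based: `derivedSeries _ m` is the paper's `(·)^{(m)}` and `Vseries φ m` is the
paper's `V_{m+1}`). -/
theorem derivedSeries_semidirectProduct_le {G H : Type*} [Group G] [Group H]
    (φ : G →* MulAut H) :
    ∀ n : ℕ,
      derivedSeries (H ⋊[φ] G) n ≤
        (Vseries φ n).map SemidirectProduct.inl ⊔
          (derivedSeries G n).map SemidirectProduct.inr := by
  intro n
  induction n with
  | zero =>
    intro x _
    rw [← SemidirectProduct.inl_left_mul_inr_right x]
    exact Subgroup.mul_mem_sup ⟨x.left, Subgroup.mem_top _, rfl⟩ ⟨x.right, Subgroup.mem_top _, rfl⟩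
  | succ n ih =>
    rw [derivedSeries_succ, derivedSeries_succ, Subgroup.map_commutator]
    exact (Subgroup.commutator_mono ih ih).trans
      (Subgroup.commutator_sup_le_sup_commutator (Vseries.commutator_top_map_inl_le φ n))
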